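/- Let μ0 and μ1 be Borel probability measures on ℝ with finite first moments that satisfy the monotone likelihood ratio property with μ0 dominating (μ0 ≽_lr μ1). Let d : ℝ → [0,1] be a non-decreasing function with ∫ d dμ0 > 0 and ∫ d dμ1 > 0. Then (∫ u·d(u) dμ1(u)) / (∫ d(u) dμ1(u)) ≤ (∫ u·d(u) dμ0(u)) / (∫ d(u) dμ0(u)). -/

import Mathlib

open MeasureTheory Set

/-- The monotone likelihood ratio property (MLRP) for two distributions `F0` and `F1`
on a linearly ordered measurable space, with `F0` dominating: the ratio of the
Radon–Nikodym derivatives of `F0` and `F1` with respect to the sum measure `F0 + F1`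
is non-decreasing `(F0 + F1)`-almost everywhere (with the convention, automatic in
`ℝ≥0∞`, that the ratio is `∞` where the density of `F1` vanishes but that of `F0`
does not). -/
def MLRP {α : Type*} [MeasurableSpace α] [LinearOrder α]
    (F0 F1 : Measure α) : Prop :=
  ∃ S : Set α, (F0 + F1) S = 0 ∧
    ∀ x, x ∉ S → ∀ y, y ∉ S → x ≤ y →
      F0.rnDeriv (F0 + F1) x / F1.rnDeriv (F0 + F1) x ≤
        F0.rnDeriv (F0 + F1) y / F1.rnDeriv (F0 + F1) y

open scoped ENNReal

/-! Let `g₀, g₁` be the densities of `μ0, μ1` with respect to `ν = μ0 + μ1`. In cross-multiplied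
form the MLRP says `g₀ x * g₁ y ≤ g₀ y * g₁ x` for `ν`-a.e. `x ≤ y`, hence
`(x - y) * (g₀ x * g₁ y - g₀ y * g₁ x) * d x * d y ≥ 0` for `ν ⊗ ν`-a.e. `(x, y)`, whatever the
sign of `x - y`. Integrating this symmetric expression over `ν ⊗ ν` gives twice
`(∫ u d dμ0) (∫ d dμ1) - (∫ u d dμ1) (∫ d dμ0)`, as in Chebyshev's sum inequality. -/

theorem ENNReal.mul_le_mul_of_div_le_div {a b c e : ℝ≥0∞} (hb : b ≠ ∞) (hc : c ≠ ∞)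
    (h : a / b ≤ c / e) : a * e ≤ c * b := by
  have hae : a / b * e ≤ c := ENNReal.mul_le_of_le_div h
  rcases eq_or_ne e 0 with rfl | he
  · simp
  rcases eq_or_ne b 0 with rfl | hb0
  · rcases eq_or_ne a 0 with rfl | ha
    · simp
    rw [ENNReal.div_zero ha, ENNReal.top_mul he] at hae
    exact absurd (top_le_iff.1 hae) hc
  · calc a * e = a / b * e * b := by rw [mul_right_comm, ENNReal.div_mul_cancel hb0 hb]
      _ ≤ c * b := by gcongr

theorem MLRP.exists_toReal_rnDeriv_cross {α : Type*} [MeasurableSpace α] [LinearOrder α]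
    {μ0 μ1 : Measure α} [SigmaFinite μ0] [SigmaFinite μ1] (h : MLRP μ0 μ1) :
    ∃ G : Set α, (∀ᵐ x ∂(μ0 + μ1), x ∈ G) ∧ ∀ x ∈ G, ∀ y ∈ G, x ≤ y →
      (μ0.rnDeriv (μ0 + μ1) x).toReal * (μ1.rnDeriv (μ0 + μ1) y).toReal ≤
        (μ0.rnDeriv (μ0 + μ1) y).toReal * (μ1.rnDeriv (μ0 + μ1) x).toReal := by
  obtain ⟨S, hS, hmono⟩ := h
  refine ⟨{x | x ∉ S ∧ μ0.rnDeriv (μ0 + μ1) x ≠ ∞ ∧ μ1.rnDeriv (μ0 + μ1) x ≠ ∞}, ?_, ?_⟩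
  · filter_upwards [measure_eq_zero_iff_ae_notMem.mp hS, Measure.rnDeriv_ne_top μ0 _,
      Measure.rnDeriv_ne_top μ1 _] with x hxS hx0 hx1 using ⟨hxS, hx0, hx1⟩
  · rintro x ⟨hxS, -, hx1⟩ y ⟨hyS, hy0, -⟩ hxy
    rw [← ENNReal.toReal_mul, ← ENNReal.toReal_mul]
    exact ENNReal.toReal_mono (ENNReal.mul_ne_top hy0 hx1)
      (ENNReal.mul_le_mul_of_div_le_div hx1 hy0 (hmono x hxS y hyS hxy))

theorem mul_sub_mul_nonneg_of_cross {α : Type*} [LinearOrder α] {f p q : α → ℝ}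
    (hf : Monotone f) {x y : α}
    (hxy : x ≤ y → p x * q y ≤ p y * q x) (hyx : y ≤ x → p y * q x ≤ p x * q y) :
    0 ≤ (f x - f y) * (p x * q y - p y * q x) := by
  rcases le_total x y with h | h
  · exact mul_nonneg_of_nonpos_of_nonpos (sub_nonpos.2 (hf h)) (sub_nonpos.2 (hxy h))
  · exact mul_nonneg (sub_nonneg.2 (hf h)) (sub_nonneg.2 (hyx h))

theorem integral_mul_integral_le_of_cross {α : Type*} [MeasurableSpace α] [LinearOrder α]
    {ν : Measure α} [SFinite ν] {f p q : α → ℝ} (hf : Monotone f) {G : Set α} (hG : ∀ᵐ x ∂ν, x ∈ G)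
    (hpq : ∀ x ∈ G, ∀ y ∈ G, x ≤ y → p x * q y ≤ p y * q x)
    (hp : Integrable p ν) (hq : Integrable q ν)
    (hfp : Integrable (fun x ↦ f x * p x) ν) (hfq : Integrable (fun x ↦ f x * q x) ν) :
    (∫ x, f x * q x ∂ν) * ∫ x, p x ∂ν ≤ (∫ x, f x * p x ∂ν) * ∫ x, q x ∂ν := by
  have hG₂ : ∀ᵐ z ∂ν.prod ν, z.1 ∈ G ∧ z.2 ∈ G :=
    (Measure.quasiMeasurePreserving_fst.ae hG).and (Measure.quasiMeasurePreserving_snd.ae hG)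
  have hnonneg : 0 ≤ ∫ z, (f z.1 - f z.2) * (p z.1 * q z.2 - p z.2 * q z.1) ∂ν.prod ν :=
    integral_nonneg_of_ae <| hG₂.mono fun z ⟨h₁, h₂⟩ ↦
      mul_sub_mul_nonneg_of_cross hf (hpq _ h₁ _ h₂) (hpq _ h₂ _ h₁)
  have hexpand : ∫ z, (f z.1 - f z.2) * (p z.1 * q z.2 - p z.2 * q z.1) ∂ν.prod ν =
      2 * ((∫ x, f x * p x ∂ν) * (∫ x, q x ∂ν) - (∫ x, f x * q x ∂ν) * ∫ x, p x ∂ν) := by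
    have hsplit : (fun z : α × α ↦ (f z.1 - f z.2) * (p z.1 * q z.2 - p z.2 * q z.1)) =
        fun z ↦ (f z.1 * p z.1) * q z.2 - (f z.1 * q z.1) * p z.2 -
          (p z.1 * (f z.2 * q z.2) - q z.1 * (f z.2 * p z.2)) := by
      ext z; ring
    have hfpq := hfp.mul_prod hq
    have hfqp := hfq.mul_prod hp
    have hpfq := hp.mul_prod hfq
    have hqfp := hq.mul_prod hfp
    rw [hsplit, integral_sub, integral_sub hfpq hfqp, integral_sub hpfq hqfp,
      integral_prod_mul (fun x ↦ f x * p x) q, integral_prod_mul (fun x ↦ f x * q x) p,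
      integral_prod_mul p (fun x ↦ f x * q x), integral_prod_mul q (fun x ↦ f x * p x)]
    · ring
    exacts [hfpq.sub hfqp, hpfq.sub hqfp]
  linarith

theorem outcome_rate_le_of_mlrp_general
    (μ0 μ1 : Measure ℝ) [IsProbabilityMeasure μ0] [IsProbabilityMeasure μ1]
    (hμ0 : Integrable id μ0) (hμ1 : Integrable id μ1)
    (hmlrp : MLRP μ0 μ1)
    (d : ℝ → ℝ) (hd01 : ∀ u, d u ∈ Icc (0:ℝ) 1)
    (h0 : 0 < ∫ u, d u ∂μ0) (h1 : 0 < ∫ u, d u ∂μ1) :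
    (∫ u, u * d u ∂μ1) / (∫ u, d u ∂μ1) ≤ (∫ u, u * d u ∂μ0) / (∫ u, d u ∂μ0) := by
  obtain ⟨G, hG, hcross⟩ := hmlrp.exists_toReal_rnDeriv_cross
  set ν := μ0 + μ1
  have hac0 : μ0 ≪ ν := Measure.AbsolutelyContinuous.rfl.add_right μ1
  have hac1 : μ1 ≪ ν := Measure.AbsolutelyContinuous.rfl.add_right' μ0
  have hd0 : Integrable d μ0 := Integrable.of_integral_ne_zero h0.ne'
  have hd1 : Integrable d μ1 := Integrable.of_integral_ne_zero h1.ne'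
  have hd_le : ∀ u, ‖d u‖ ≤ 1 := fun u ↦ by rw [Real.norm_of_nonneg (hd01 u).1]; exact (hd01 u).2
  have hud0 : Integrable (fun u ↦ u * d u) μ0 :=
    hμ0.mul_bdd hd0.aestronglyMeasurable (ae_of_all _ hd_le)
  have hud1 : Integrable (fun u ↦ u * d u) μ1 :=
    hμ1.mul_bdd hd1.aestronglyMeasurable (ae_of_all _ hd_le)
  set p : ℝ → ℝ := fun u ↦ (μ0.rnDeriv ν u).toReal * d u
  set q : ℝ → ℝ := fun u ↦ (μ1.rnDeriv ν u).toReal * d u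
  have hpq : ∀ x ∈ G, ∀ y ∈ G, x ≤ y → p x * q y ≤ p y * q x := fun x hx y hy hxy ↦ by
    have := mul_le_mul_of_nonneg_right (hcross x hx y hy hxy)
      (mul_nonneg (hd01 x).1 (hd01 y).1)
    simp only [p, q]
    linarith
  have hcheb := integral_mul_integral_le_of_cross (f := id) monotone_id hG hpq
    ((integrable_toReal_rnDeriv_mul_iff hac0).2 hd0)
    ((integrable_toReal_rnDeriv_mul_iff hac1).2 hd1)
    (by simpa only [p, id, mul_left_comm] using (integrable_toReal_rnDeriv_mul_iff hac0).2 hud0)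
    (by simpa only [q, id, mul_left_comm] using (integrable_toReal_rnDeriv_mul_iff hac1).2 hud1)
  rw [div_le_div_iff₀ h1 h0]
  simpa only [p, q, id, mul_left_comm _ (ENNReal.toReal _), integral_toReal_rnDeriv_mul hac0,
    integral_toReal_rnDeriv_mul hac1] using hcheb

/-- **Eq. (hit-rate) in the proof of Theorem 1.**  Let `μ0` and `μ1` be Borel probability
measures on `ℝ` with finite first moments satisfying the MLRP with `μ0` dominating, and
let `d : ℝ → [0,1]` be a non-decreasing risk-decision curve with positive decision rate
under both measures.  Then the outcome rate under `μ1` is at most the outcome rate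
under `μ0`. -/
theorem outcome_rate_le_of_mlrp
    (μ0 μ1 : Measure ℝ) [IsProbabilityMeasure μ0] [IsProbabilityMeasure μ1]
    (hμ0 : Integrable id μ0) (hμ1 : Integrable id μ1)
    (hmlrp : MLRP μ0 μ1)
    (d : ℝ → ℝ) (hd : Monotone d) (hd01 : ∀ u, d u ∈ Icc (0:ℝ) 1)
    (h0 : 0 < ∫ u, d u ∂μ0) (h1 : 0 < ∫ u, d u ∂μ1) :
    (∫ u, u * d u ∂μ1) / (∫ u, d u ∂μ1) ≤ (∫ u, u * d u ∂μ0) / (∫ u, d u ∂μ0) :=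
  outcome_rate_le_of_mlrp_general μ0 μ1 hμ0 hμ1 hmlrp d hd01 h0 h1
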